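/- Assume that μ_s is absolutely continuous with respect to Lebesgue measure for every s ∈ {1,…,k}, and define the regressor g*(x,s) := Σ_{t=1}^k π_t F_{μ_t}⁻¹(F_{μ_s}(η_s(x))). Then for every s ∈ {1,…,k}, the conditional distribution of g*(X,S) given S = s equals ν̄, the pushforward of Unif(0,1) under u ↦ Σ_{t=1}^k π_t F_{μ_t}⁻¹(u); in particular g*(X,S) is independent of S, i.e., g* satisfies demographic parity. (First part of Theorem 2.) -/

import Mathlib

open MeasureTheory ProbabilityTheory

/-- CDF of a measure on ℝ. -/
noncomputable def cdf' (μ : Measure ℝ) (x : ℝ) : ℝ := (μ (Set.Iic x)).toReal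

/-- Quantile function of a measure on ℝ: `F_μ⁻¹(u) = inf {x : F_μ(x) ≥ u}`. -/
noncomputable def quantile' (μ : Measure ℝ) (u : ℝ) : ℝ := sInf { x : ℝ | u ≤ cdf' μ x }

/-- Uniform distribution on (0,1): Lebesgue measure restricted to (0,1). -/
noncomputable def unif01 : Measure ℝ := volume.restrict (Set.Ioo 0 1)

/-!
Since `μ_s` has no atoms, its CDF `F_s` is continuous, and then `F_s(η(X,S))` is uniform on
`(0,1)` given `S = s` (probability integral transform). Given `S = s`, `g*(X,S)` is therefore the
image of a uniform variable under the map `u ↦ Σ_t π_t F_{μ_t}⁻¹(u)`, which does not depend on `s`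
and is monotone on `(0,1)`, hence measurable there. A conditional law given `S` that does not
depend on the value of `S` amounts to independence from `S`.
-/

open Set Filter Topology

lemma cdf'_eq_cdf (μ : Measure ℝ) [IsProbabilityMeasure μ] : cdf' μ = cdf μ := by
  ext x
  rw [cdf_eq_real]
  rfl

instance isProbabilityMeasure_unif01 : IsProbabilityMeasure unif01 :=
  ⟨by simp [unif01]⟩

lemma unif01_Iic {u : ℝ} (hu : u ≤ 1) : unif01 (Iic u) = ENNReal.ofReal u := by
  rw [unif01, Measure.restrict_congr_set Ioo_ae_eq_Ioc, Measure.restrict_apply measurableSet_Iic,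
    Iic_inter_Ioc_of_le hu, Real.volume_Ioc, sub_zero]

lemma continuous_cdf (μ : Measure ℝ) [IsProbabilityMeasure μ] [NullSingletonClass μ] :
    Continuous (cdf μ) := by
  refine continuous_iff_continuousAt.2 fun a => ?_
  rw [(monotone_cdf μ).continuousAt_iff_leftLim_eq_rightLim, (cdf μ).rightLim_eq]
  have h : (cdf μ).measure {a} = 0 := by rw [measure_cdf]; exact measure_singleton a
  rw [StieltjesFunction.measure_singleton, ENNReal.ofReal_eq_zero, sub_nonpos] at h
  exact le_antisymm ((monotone_cdf μ).leftLim_le le_rfl) h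

lemma measure_setOf_cdf_le (μ : Measure ℝ) [IsProbabilityMeasure μ] [NullSingletonClass μ] {u : ℝ}
    (hu₀ : 0 ≤ u) (hu₁ : u < 1) : μ {x | cdf μ x ≤ u} = ENNReal.ofReal u := by
  set A := {x | cdf μ x ≤ u}
  rcases A.eq_empty_or_nonempty with hA | hA
  · obtain rfl : u = 0 := by
      refine le_antisymm (not_lt.1 fun hu => ?_) hu₀
      obtain ⟨x, hx⟩ := ((tendsto_cdf_atBot μ).eventually_lt_const hu).exists
      exact eq_empty_iff_forall_notMem.1 hA x hx.le
    simp [hA]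
  obtain ⟨b, hb⟩ := ((tendsto_cdf_atTop μ).eventually_const_lt hu₁).exists
  have hbdd : BddAbove A := ⟨b, fun y hy => ((monotone_cdf μ).reflect_lt (hy.trans_lt hb)).le⟩
  have hclosed : IsClosed A := isClosed_le (continuous_cdf μ) continuous_const
  set a := sSup A
  have ha : cdf μ a ≤ u := hclosed.csSup_mem hA hbdd
  have hA_eq : A = Iic a :=
    Subset.antisymm (fun y hy => le_csSup hbdd hy) fun y hy => ((monotone_cdf μ) hy).trans ha
  -- points right of `a` lie outside `A`, so `u ≤ cdf μ a` by continuity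
  have ha' : u ≤ cdf μ a := by
    have hge : IsClosed {x | u ≤ cdf μ x} := isClosed_le continuous_const (continuous_cdf μ)
    refine hge.closure_subset_iff.2 (fun x hx => ?_) (closure_Ioi a ▸ self_mem_Ici)
    exact not_lt.1 fun h : cdf μ x < u =>
      (mem_Ioi.1 hx).not_ge (le_csSup hbdd (show x ∈ A from h.le))
  rw [hA_eq, ← ofReal_cdf, le_antisymm ha ha']

theorem map_cdf_eq_unif01 (μ : Measure ℝ) [IsProbabilityMeasure μ] [NullSingletonClass μ] :
    μ.map (cdf μ) = unif01 := by
  refine Measure.ext_of_Iic _ _ fun u => ?_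
  rw [Measure.map_apply (monotone_cdf μ).measurable measurableSet_Iic]
  change μ {x | cdf μ x ≤ u} = _
  rcases lt_or_ge u 0 with hu₀ | hu₀
  · rw [unif01_Iic (by linarith), ENNReal.ofReal_of_nonpos hu₀.le, ← measure_empty (μ := μ)]
    congr 1
    exact eq_empty_of_forall_notMem fun x hx => (hx.trans_lt hu₀).not_ge (cdf_nonneg μ x)
  rcases lt_or_ge u 1 with hu₁ | hu₁
  · rw [measure_setOf_cdf_le μ hu₀ hu₁, unif01_Iic hu₁.le]
  · have h : {x | cdf μ x ≤ u} = univ := eq_univ_of_forall fun x => (cdf_le_one μ x).trans hu₁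
    rw [h, measure_univ, unif01, Measure.restrict_apply_superset fun x hx => hx.2.le.trans hu₁,
      Real.volume_Ioo]
    simp

lemma quantile'_monotoneOn (μ : Measure ℝ) [IsProbabilityMeasure μ] :
    MonotoneOn (quantile' μ) (Ioo 0 1) := by
  intro u hu v hv huv
  simp only [quantile', cdf'_eq_cdf]
  refine csInf_le_csInf ?_ ?_ fun x hx => huv.trans hx
  · obtain ⟨a, ha⟩ := ((tendsto_cdf_atBot μ).eventually_lt_const hu.1).exists
    exact ⟨a, fun y hy => ((monotone_cdf μ).reflect_lt (ha.trans_le hy)).le⟩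
  · obtain ⟨b, hb⟩ := ((tendsto_cdf_atTop μ).eventually_const_lt hv.2).exists
    exact ⟨b, hb.le⟩

theorem indepFun_of_map_cond_eq {Ω α β : Type*} [MeasurableSpace Ω] [MeasurableSpace α]
    [MeasurableSingletonClass α] [Countable α] [MeasurableSpace β] {μ : Measure Ω}
    [IsProbabilityMeasure μ] {f : Ω → β} {S : Ω → α} {ν : Measure β} (hS : Measurable S)
    (hf : ∀ s, AEMeasurable f μ[|S ⁻¹' {s}])
    (hν : ∀ s, μ (S ⁻¹' {s}) ≠ 0 → (μ[|S ⁻¹' {s}]).map f = ν) :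
    IndepFun f S μ := by
  rw [indepFun_iff_measure_inter_preimage_eq_mul]
  intro A B hA hB
  have hfiber : ∀ s, μ (S ⁻¹' {s} ∩ f ⁻¹' A) = ν A * μ (S ⁻¹' {s}) := by
    intro s
    rw [← cond_mul_eq_inter (hS (measurableSet_singleton s))]
    rcases eq_or_ne (μ (S ⁻¹' {s})) 0 with h0 | h0
    · simp [h0]
    · rw [← Measure.map_apply_of_aemeasurable (hf s) hA, hν s h0]
  have hprod : ∀ B, MeasurableSet B → μ (f ⁻¹' A ∩ S ⁻¹' B) = ν A * μ (S ⁻¹' B) := by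
    intro B hB
    have hsingle : ∀ s ∈ B, MeasurableSet (S ⁻¹' {s}) :=
      fun s _ => hS (measurableSet_singleton s)
    rw [inter_comm, ← Measure.restrict_apply (hS hB),
      ← tsum_measure_preimage_singleton B.to_countable hsingle,
      ← tsum_measure_preimage_singleton B.to_countable hsingle]
    simp_rw [Measure.restrict_apply (hS (measurableSet_singleton _)), hfiber,
      ENNReal.tsum_mul_left]
  have hfA : μ (f ⁻¹' A) = ν A := by simpa using hprod univ .univ
  rw [hprod B hB, hfA]

section RandomVariable

variable {Ω β : Type*} [MeasurableSpace Ω] [MeasurableSpace β]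

theorem map_cdf_comp_eq_unif01 (P : Measure Ω) [IsProbabilityMeasure P] {Z : Ω → ℝ}
    (hZ : Measurable Z) [NullSingletonClass (P.map Z)] :
    P.map (fun ω => cdf (P.map Z) (Z ω)) = unif01 := by
  have := Measure.isProbabilityMeasure_map (μ := P) hZ.aemeasurable
  rw [← map_cdf_eq_unif01 (P.map Z), Measure.map_map (monotone_cdf _).measurable hZ]
  rfl

theorem aemeasurable_comp_cdf (P : Measure Ω) [IsProbabilityMeasure P] {Z : Ω → ℝ}
    (hZ : Measurable Z) [NullSingletonClass (P.map Z)] {G : ℝ → β}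
    (hG : AEMeasurable G unif01) : AEMeasurable (fun ω => G (cdf (P.map Z) (Z ω))) P := by
  rw [← map_cdf_comp_eq_unif01 P hZ] at hG
  exact hG.comp_aemeasurable ((monotone_cdf _).measurable.comp hZ).aemeasurable

theorem map_comp_cdf_eq (P : Measure Ω) [IsProbabilityMeasure P] {Z : Ω → ℝ}
    (hZ : Measurable Z) [NullSingletonClass (P.map Z)] {G : ℝ → β}
    (hG : AEMeasurable G unif01) : P.map (fun ω => G (cdf (P.map Z) (Z ω))) = unif01.map G := by
  rw [← map_cdf_comp_eq_unif01 P hZ] at hG ⊢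
  exact (hG.map_map_of_aemeasurable ((monotone_cdf _).measurable.comp hZ).aemeasurable).symm

end RandomVariable

theorem projection_to_fairness_is_DP_general
    {Ω : Type*} [MeasurableSpace Ω] (Pr : Measure Ω) [IsProbabilityMeasure Pr]
    (d k : ℕ)
    (X : Ω → EuclideanSpace ℝ (Fin d)) (S : Ω → Fin k)
    (hX : Measurable X) (hS : Measurable S)
    (π : Fin k → ℝ) (hπ : ∀ s, π s = (Pr (S ⁻¹' {s})).toReal) (hπpos : ∀ s, 0 < π s)
    (η : EuclideanSpace ℝ (Fin d) × Fin k → ℝ) (hη : Measurable η)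
    -- conditional distributions of `η(X,S)` given `S = s`, absolutely continuous
    (μ : Fin k → Measure ℝ)
    (hμ : ∀ s, μ s = (Pr[|S ⁻¹' {s}]).map (fun ω => η (X ω, S ω)))
    (hμac : ∀ s, μ s ≪ volume)
    -- the projection to fairness `g*` and the barycenter `ν̄`
    (gstar : EuclideanSpace ℝ (Fin d) × Fin k → ℝ)
    (hgstar : ∀ x s, gstar (x, s) = ∑ t, π t * quantile' (μ t) (cdf' (μ s) (η (x, s))))
    (νbar : Measure ℝ)
    (hνbar : νbar = unif01.map (fun u => ∑ t, π t * quantile' (μ t) u)) :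
    (∀ s, (Pr[|S ⁻¹' {s}]).map (fun ω => gstar (X ω, S ω)) = νbar) ∧
    IndepFun (fun ω => gstar (X ω, S ω)) S Pr := by
  set G : ℝ → ℝ := fun u => ∑ t, π t * quantile' (μ t) u
  set Z : Ω → ℝ := fun ω => η (X ω, S ω)
  have hZ : Measurable Z := hη.comp (hX.prodMk hS)
  have hfiber_ne : ∀ s, Pr (S ⁻¹' {s}) ≠ 0 := fun s h =>
    (hπpos s).ne' (by rw [hπ s, h, ENNReal.toReal_zero])
  have hμprob : ∀ s, IsProbabilityMeasure (μ s) := fun s =>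
    have := cond_isProbabilityMeasure (hfiber_ne s)
    hμ s ▸ Measure.isProbabilityMeasure_map hZ.aemeasurable
  have hG : AEMeasurable G unif01 :=
    aemeasurable_restrict_of_monotoneOn measurableSet_Ioo fun u hu v hv huv =>
      Finset.sum_le_sum fun t _ =>
        mul_le_mul_of_nonneg_left (quantile'_monotoneOn (μ t) hu hv huv) (hπpos t).le
  have hlaw : ∀ s, AEMeasurable (fun ω => gstar (X ω, S ω)) Pr[|S ⁻¹' {s}] ∧
      (Pr[|S ⁻¹' {s}]).map (fun ω => gstar (X ω, S ω)) = νbar := by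
    intro s
    have := cond_isProbabilityMeasure (hfiber_ne s)
    have : NullSingletonClass ((Pr[|S ⁻¹' {s}]).map Z) :=
      ⟨fun x => hμ s ▸ hμac s (measure_singleton x)⟩
    have hae : (fun ω => gstar (X ω, S ω)) =ᵐ[Pr[|S ⁻¹' {s}]]
        fun ω => G (cdf ((Pr[|S ⁻¹' {s}]).map Z) (Z ω)) := by
      filter_upwards [ae_cond_mem (hS (measurableSet_singleton s))] with ω (hω : S ω = s)
      change gstar (X ω, S ω) = G (cdf _ (η (X ω, S ω)))
      rw [hω, hgstar, cdf'_eq_cdf, hμ s]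
    refine ⟨(aemeasurable_comp_cdf _ hZ hG).congr hae.symm, ?_⟩
    rw [Measure.map_congr hae, map_comp_cdf_eq _ hZ hG, hνbar]
  exact ⟨fun s => (hlaw s).2,
    indepFun_of_map_cond_eq hS (fun s => (hlaw s).1) fun s _ => (hlaw s).2⟩

/-- **Theorem 2 (first part).** If every `μ_s` is absolutely continuous, then the
regressor `g*(x,s) = Σ_t π_t F_{μ_t}⁻¹(F_{μ_s}(η_s(x)))` has conditional distribution
given `S = s` equal to the barycenter `ν̄` for every `s`; in particular `g*(X,S)` is
independent of `S`, i.e. `g*` satisfies demographic parity. -/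
theorem projection_to_fairness_is_DP
    {Ω : Type*} [MeasurableSpace Ω] (Pr : Measure Ω) [IsProbabilityMeasure Pr]
    (d k : ℕ) (hk : 0 < k)
    (X : Ω → EuclideanSpace ℝ (Fin d)) (S : Ω → Fin k) (Y : Ω → ℝ)
    (hX : Measurable X) (hS : Measurable S) (hY : Measurable Y)
    (hY2 : MemLp Y 2 Pr)
    (π : Fin k → ℝ) (hπ : ∀ s, π s = (Pr (S ⁻¹' {s})).toReal) (hπpos : ∀ s, 0 < π s)
    -- the Bayes regressor: `η(X,S) = 𝔼[Y | X,S]` a.s.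
    (η : EuclideanSpace ℝ (Fin d) × Fin k → ℝ) (hη : Measurable η)
    (hηBayes : (fun ω => η (X ω, S ω))
      =ᵐ[Pr] MeasureTheory.condExp
        (MeasurableSpace.comap (fun ω => (X ω, S ω)) inferInstance) Pr Y)
    -- conditional distributions of `η(X,S)` given `S = s`, absolutely continuous
    (μ : Fin k → Measure ℝ)
    (hμ : ∀ s, μ s = (Pr[|S ⁻¹' {s}]).map (fun ω => η (X ω, S ω)))
    (hμac : ∀ s, μ s ≪ volume)
    -- the projection to fairness `g*` and the barycenter `ν̄`
    (gstar : EuclideanSpace ℝ (Fin d) × Fin k → ℝ)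
    (hgstar : ∀ x s, gstar (x, s) = ∑ t, π t * quantile' (μ t) (cdf' (μ s) (η (x, s))))
    (νbar : Measure ℝ)
    (hνbar : νbar = unif01.map (fun u => ∑ t, π t * quantile' (μ t) u)) :
    (∀ s, (Pr[|S ⁻¹' {s}]).map (fun ω => gstar (X ω, S ω)) = νbar) ∧
    IndepFun (fun ω => gstar (X ω, S ω)) S Pr :=
  projection_to_fairness_is_DP_general Pr d k X S hX hS π hπ hπpos η hη μ hμ hμac gstar hgstar νbar
    hνbar
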